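/- arXiv:1705.04735 — 2 statements merged into one kernel-verified Lean document; each statement's English description precedes it below -/
import Mathlib

section
/- Let G be a graph with γ_t(G) = 2·γ(G) such that there exists a minimum dominating set D of G (a γ(G)-set) in which every vertex of D is adjacent to a vertex of degree one. Then for any graph H with γ(H) ≥ 4, γ_r(G∘H) = 4·γ(G). -/
open Finset
open scoped Classical

/-- The lexicographic product of two simple graphs. -/
def lexProd {α β : Type*} (G : SimpleGraph α) (H : SimpleGraph β) :
    SimpleGraph (α × β) where
  Adj p q := G.Adj p.1 q.1 ∨ (p.1 = q.1 ∧ H.Adj p.2 q.2)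
  symm := by
    constructor
    rintro ⟨a, b⟩ ⟨c, d⟩ (h | ⟨h1, h2⟩)
    · exact Or.inl h.symm
    · exact Or.inr ⟨h1.symm, h2.symm⟩
  loopless := by
    constructor
    rintro ⟨a, b⟩ (h | ⟨h1, h2⟩)
    · exact G.loopless.irrefl a h
    · exact H.loopless.irrefl b h2

/-- A vertex `w` is undefended with respect to `g` if `g w = 0` and `g x = 0`
for every neighbour `x` of `w`. -/
def Undefended {α : Type*} (G : SimpleGraph α) (g : α → ℕ) (w : α) : Prop :=
  g w = 0 ∧ ∀ x, G.Adj w x → g x = 0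

/-- A weak Roman dominating function. -/
def IsWRDF {α : Type*} (G : SimpleGraph α) (f : α → ℕ) : Prop :=
  (∀ v, f v ≤ 2) ∧
    ∀ v, f v = 0 → ∃ u, G.Adj u v ∧ 1 ≤ f u ∧
      ∀ w, ¬ Undefended G (Function.update (Function.update f v 1) u (f u - 1)) w

/-- The weak Roman domination number. -/
noncomputable def weakRomanNumber {α : Type*} (G : SimpleGraph α) [Fintype α] : ℕ :=
  sInf {k | ∃ f : α → ℕ, IsWRDF G f ∧ ∑ v, f v = k}

/-- A dominating set. -/
def IsDomSet {α : Type*} (G : SimpleGraph α) (D : Finset α) : Prop :=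
  ∀ v ∉ D, ∃ u ∈ D, G.Adj u v

/-- The domination number. -/
noncomputable def domNumber {α : Type*} (G : SimpleGraph α) [Fintype α] : ℕ :=
  sInf {k | ∃ D : Finset α, IsDomSet G D ∧ D.card = k}

/-- A total dominating set. -/
def IsTotalDomSet {α : Type*} (G : SimpleGraph α) (S : Finset α) : Prop :=
  ∀ v, ∃ u ∈ S, G.Adj u v

/-- The total domination number. -/
noncomputable def totalDomNumber {α : Type*} (G : SimpleGraph α) [Fintype α] : ℕ :=
  sInf {k | ∃ S : Finset α, IsTotalDomSet G S ∧ S.card = k}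

/-- A double total dominating set: every vertex has at least two neighbours in `S`. -/
def IsDoubleTotalDomSet {α : Type*} (G : SimpleGraph α) (S : Finset α) : Prop :=
  ∀ v, ∃ u₁ ∈ S, ∃ u₂ ∈ S, u₁ ≠ u₂ ∧ G.Adj u₁ v ∧ G.Adj u₂ v

/-- The double total domination number. -/
noncomputable def doubleTotalDomNumber {α : Type*} (G : SimpleGraph α) [Fintype α] : ℕ :=
  sInf {k | ∃ S : Finset α, IsDoubleTotalDomSet G S ∧ S.card = k}

/-- A 2-packing: the closed neighbourhoods of distinct members are disjoint. -/
def IsTwoPacking {α : Type*} (G : SimpleGraph α) (X : Finset α) : Prop :=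
  ∀ u ∈ X, ∀ v ∈ X, u ≠ v →
    ∀ w, ¬ ((w = u ∨ G.Adj u w) ∧ (w = v ∨ G.Adj v w))

/-- The 2-packing number. -/
noncomputable def twoPackingNumber {α : Type*} (G : SimpleGraph α) [Fintype α] : ℕ :=
  sSup {k | ∃ X : Finset α, IsTwoPacking G X ∧ X.card = k}

/-- A secure dominating set. -/
def IsSecureDomSet {α : Type*} (G : SimpleGraph α) (S : Finset α) : Prop :=
  IsDomSet G S ∧ ∀ v ∉ S, ∃ u ∈ S, G.Adj u v ∧ IsDomSet G (insert v (S.erase u))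

/-- The secure domination number. -/
noncomputable def secureDomNumber {α : Type*} (G : SimpleGraph α) [Fintype α] : ℕ :=
  sInf {k | ∃ S : Finset α, IsSecureDomSet G S ∧ S.card = k}

/-- The corona product of two graphs. -/
def corona {α β : Type*} (G₁ : SimpleGraph α) (G₂ : SimpleGraph β) :
    SimpleGraph (α ⊕ α × β) where
  Adj x y :=
    match x, y with
    | .inl a, .inl a' => G₁.Adj a a'
    | .inl a, .inr p => a = p.1
    | .inr p, .inl a => p.1 = a
    | .inr p, .inr q => p.1 = q.1 ∧ G₂.Adj p.2 q.2
  symm := by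
    constructor
    rintro (a | p) (a' | q) h
    · exact G₁.symm.symm _ _ h
    · exact h.symm
    · exact h.symm
    · exact ⟨h.1.symm, G₂.symm.symm _ _ h.2⟩
  loopless := by
    constructor
    rintro (a | p) h
    · exact G₁.loopless.irrefl a h
    · exact G₂.loopless.irrefl p.2 h.2

/-!
Take a `γ(G)`-set `D` whose vertices `a` carry leaves `ℓ_a`. Adding to `D` the leaves of all but two
of its vertices, together with a common neighbour of those two, would give a total dominating set of
size `2γ(G) - 1`; so `γ_t(G) = 2γ(G)` forces `D` to be a 2-packing. Any weak Roman dominating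
function of `G ∘ H` must put weight at least `4` on `N[a] × V(H)`: with less, the columns over `a`
and `ℓ_a` have so few nonzero entries that, as `γ(H) ≥ 4`, some zero vertex of one of these columns
is left undefended after a move. Summing over the disjoint sets `N[a]` gives `γ_r(G ∘ H) ≥ 4γ(G)`.
Conversely, value `2` on `S × {b₀}` for a total dominating set `S = D ∪ {ℓ_a}` of size `2γ(G)` is
a weak Roman dominating function.
-/

section Domination

variable {α : Type*} {G : SimpleGraph α}

lemma domNumber_le_card [Fintype α] {D : Finset α} (hD : IsDomSet G D) : domNumber G ≤ D.card :=
  Nat.sInf_le ⟨D, hD, rfl⟩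

lemma totalDomNumber_le_card [Fintype α] {T : Finset α} (hT : IsTotalDomSet G T) :
    totalDomNumber G ≤ T.card :=
  Nat.sInf_le ⟨T, hT, rfl⟩

lemma exists_not_dominated_of_card_lt [Fintype α] {B : Finset α} (hB : B.card < domNumber G) :
    ∃ b ∉ B, ∀ y ∈ B, ¬ G.Adj y b := by
  by_contra! h
  exact (domNumber_le_card h).not_gt hB

lemma isTotalDomSet_of_superset {D T : Finset α} (hD : IsDomSet G D) (hDT : D ⊆ T)
    (hT : ∀ x ∈ D, ∃ y ∈ T, G.Adj y x) : IsTotalDomSet G T := by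
  intro v
  by_cases hv : v ∈ D
  · exact hT v hv
  · obtain ⟨u, hu, huv⟩ := hD v hv
    exact ⟨u, hDT hu, huv⟩

lemma adj_or_adj_of_closedNbhd_inter {a b w : α} (hab : a ≠ b) (ha : w = a ∨ G.Adj a w)
    (hb : w = b ∨ G.Adj b w) : G.Adj w a ∨ G.Adj b a := by
  rcases ha with rfl | ha
  · rcases hb with rfl | hb
    · exact absurd rfl hab
    · exact Or.inr hb
  · exact Or.inl ha.symm

lemma isTwoPacking_of_two_mul_card_le {D : Finset α} (hD : IsDomSet G D)
    (hnbr : ∀ x ∈ D, ∃ y, G.Adj x y) (hT : ∀ T, IsTotalDomSet G T → 2 * D.card ≤ T.card) :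
    IsTwoPacking G D := by
  choose! p hp using hnbr
  intro a ha b hb hab w ⟨hwa, hwb⟩
  set T := insert w (D ∪ ((D.erase a).erase b).image p)
  have hDT : D ⊆ T := fun x hx => mem_insert_of_mem (mem_union_left _ hx)
  have hTtot : IsTotalDomSet G T := by
    refine isTotalDomSet_of_superset hD hDT fun x hx => ?_
    by_cases hxa : x = a
    · subst hxa
      rcases adj_or_adj_of_closedNbhd_inter hab hwa hwb with h | h
      · exact ⟨w, mem_insert_self _ _, h⟩
      · exact ⟨b, hDT hb, h⟩
    by_cases hxb : x = b
    · subst hxb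
      rcases adj_or_adj_of_closedNbhd_inter (Ne.symm hab) hwb hwa with h | h
      · exact ⟨w, mem_insert_self _ _, h⟩
      · exact ⟨a, hDT ha, h⟩
    refine ⟨p x, mem_insert_of_mem (mem_union_right _ (mem_image_of_mem p ?_)), (hp x hx).symm⟩
    simp [hxa, hxb, hx]
  have hcard : T.card < 2 * D.card := by
    have herase : ((D.erase a).erase b).card + 2 = D.card := by
      rw [card_erase_of_mem (mem_erase.2 ⟨Ne.symm hab, hb⟩), card_erase_of_mem ha]
      have : 2 ≤ D.card := by
        simpa [card_pair hab] using card_le_card (insert_subset ha (singleton_subset_iff.2 hb))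
      omega
    calc T.card ≤ D.card + (((D.erase a).erase b).image p).card + 1 :=
          (card_insert_le _ _).trans (Nat.add_le_add_right (card_union_le _ _) 1)
      _ ≤ D.card + ((D.erase a).erase b).card + 1 :=
          Nat.add_le_add_right (Nat.add_le_add_left card_image_le _) _
      _ < 2 * D.card := by omega
  exact (hT T hTtot).not_gt hcard

lemma sum_sum_closedNbhd_le_of_isTwoPacking [Fintype α] {D : Finset α} (hD : IsTwoPacking G D)
    (g : α → ℕ) : ∑ a ∈ D, ∑ x ∈ insert a (G.neighborFinset a), g x ≤ ∑ x, g x := by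
  rw [← sum_biUnion]
  · exact sum_le_sum_of_subset (subset_univ _)
  · intro a ha b hb hab
    simp only [Function.onFun, disjoint_left, mem_insert, SimpleGraph.mem_neighborFinset]
    exact fun w hwa hwb => hD a ha b hb hab w ⟨hwa, hwb⟩

end Domination

section WeakRoman

variable {α : Type*} {G : SimpleGraph α}

lemma isWRDF_const_two : IsWRDF G fun _ => 2 :=
  ⟨fun _ => le_rfl, fun _ h => absurd h two_ne_zero⟩

lemma weakRomanNumber_le [Fintype α] {f : α → ℕ} (hf : IsWRDF G f) :
    weakRomanNumber G ≤ ∑ v, f v :=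
  Nat.sInf_le ⟨f, hf, rfl⟩

lemma le_weakRomanNumber [Fintype α] {k : ℕ} (h : ∀ f, IsWRDF G f → k ≤ ∑ v, f v) :
    k ≤ weakRomanNumber G :=
  le_csInf ⟨_, _, isWRDF_const_two, rfl⟩ fun _ ⟨f, hf, hk⟩ => hk ▸ h f hf

end WeakRoman

section LexProd

variable {α β : Type*} {G : SimpleGraph α} {H : SimpleGraph β}

lemma adj_fst_of_adj_of_column_zero {f : α × β → ℕ} {u : α × β} {x : α} {b : β}
    (hu : (lexProd G H).Adj u (x, b)) (hfu : 1 ≤ f u) (hcol : ∀ y, H.Adj b y → f (x, y) = 0) :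
    G.Adj u.1 x := by
  obtain ⟨u₁, u₂⟩ := u
  rcases hu with h | ⟨h₁, h₂⟩
  · exact h
  · simp only at h₁ h₂
    subst h₁
    have := hcol u₂ h₂.symm
    omega

lemma isWRDF_two_on_isTotalDomSet {S : Finset α} (hS : IsTotalDomSet G S) (b₀ : β) :
    IsWRDF (lexProd G H) fun p => if p ∈ S ×ˢ {b₀} then 2 else 0 := by
  refine ⟨fun v => by dsimp only; split_ifs <;> omega, fun v _ => ?_⟩
  obtain ⟨u, hu, huv⟩ := hS v.1
  refine ⟨(u, b₀), Or.inl huv, by simp [hu], fun w ⟨_, hw⟩ => ?_⟩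
  obtain ⟨u', hu', hu'w⟩ := hS w.1
  have := hw (u', b₀) (Or.inl hu'w.symm)
  simp only [Function.update_apply] at this
  split_ifs at this <;> simp_all

variable [Fintype β]

def columnWeight (f : α × β → ℕ) (x : α) : ℕ := ∑ b, f (x, b)

lemma apply_le_columnWeight (f : α × β → ℕ) (p : α × β) : f p ≤ columnWeight f p.1 :=
  single_le_sum (f := fun b => f (p.1, b)) (fun _ _ => Nat.zero_le _) (mem_univ p.2)

lemma apply_le_sum_columnWeight (f : α × β → ℕ) {T : Finset α} {p : α × β} (hp : p.1 ∈ T) :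
    f p ≤ ∑ x ∈ T, columnWeight f x :=
  (apply_le_columnWeight f p).trans (single_le_sum (fun _ _ => Nat.zero_le _) hp)

lemma add_le_sum_columnWeight (f : α × β → ℕ) {T : Finset α} {p q : α × β} (hp : p.1 ∈ T)
    (hq : q.1 ∈ T) (hpq : p ≠ q) : f p + f q ≤ ∑ x ∈ T, columnWeight f x := by
  rw [← sum_pair hpq]
  calc ∑ r ∈ {p, q}, f r ≤ ∑ r ∈ T ×ˢ univ, f r :=
        sum_le_sum_of_subset (by simp [insert_subset_iff, hp, hq])
    _ = _ := sum_product _ _ _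

lemma sum_columnWeight [Fintype α] (f : α × β → ℕ) : ∑ x, columnWeight f x = ∑ p, f p :=
  (Fintype.sum_prod_type f).symm

lemma exists_free_of_columnWeight_add_card_lt (f : α × β → ℕ) (x : α) {E : Finset β}
    (h : columnWeight f x + E.card < domNumber H) :
    ∃ b ∉ E, (∀ y ∈ E, ¬ H.Adj y b) ∧ ∀ y, (y = b ∨ H.Adj b y) → f (x, y) = 0 := by
  set S := univ.filter fun b => f (x, b) ≠ 0
  have hS : S.card ≤ columnWeight f x := by
    simpa [columnWeight] using (card_nsmul_le_sum S (fun b => f (x, b)) 1 fun b hb => by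
      simp only [S, mem_filter] at hb; omega).trans (sum_le_sum_of_subset (subset_univ S))
  obtain ⟨b, hbSE, hb⟩ := exists_not_dominated_of_card_lt (G := H) (B := S ∪ E)
    ((card_union_le _ _).trans_lt (by omega))
  refine ⟨b, fun hbE => hbSE (mem_union_right _ hbE), fun y hy => hb y (mem_union_right _ hy), ?_⟩
  rintro y (rfl | hby) <;> by_contra hy
  · exact hbSE (mem_union_left _ (by simpa [S] using hy))
  · exact hb y (mem_union_left _ (by simpa [S] using hy)) hby.symm

/-- Once the defender `u` has moved, the columns next to `x` are empty, and nothing inside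
column `x` reaches `(x, z')`. -/
lemma undefended_after_move [Fintype α] {f : α × β → ℕ} {x : α} {z z' : β} {u : α × β}
    (hz : z' ≠ z) (hzz : ¬ H.Adj z z') (hcol : ∀ y, (y = z' ∨ H.Adj z' y) → f (x, y) = 0)
    (hxu : G.Adj x u.1) (hfu : 1 ≤ f u) (hN : ∑ y ∈ G.neighborFinset x, columnWeight f y ≤ 1) :
    Undefended (lexProd G H) (Function.update (Function.update f (x, z) 1) u (f u - 1))
      (x, z') := by
  have hux : u.1 ≠ x := (G.ne_of_adj hxu).symm
  have hu_mem : u.1 ∈ G.neighborFinset x := (G.mem_neighborFinset _ _).2 hxu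
  have hfu1 : f u ≤ 1 := (apply_le_sum_columnWeight f hu_mem).trans hN
  refine ⟨?_, ?_⟩
  · rw [Function.update_of_ne (by rintro rfl; exact hux rfl),
      Function.update_of_ne (by simpa using hz)]
    exact hcol z' (Or.inl rfl)
  · rintro ⟨y, c⟩ (h | ⟨h₁, h₂⟩)
    · by_cases hpu : (y, c) = u
      · rw [hpu, Function.update_self]
        omega
      · have hxy : G.Adj x y := h
        rw [Function.update_of_ne hpu, Function.update_of_ne (by simp [hxy.ne'])]
        have := add_le_sum_columnWeight f ((G.mem_neighborFinset _ _).2 hxy) hu_mem hpu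
        omega
    · simp only at h₁ h₂
      subst h₁
      have hcz : c ≠ z := by rintro rfl; exact hzz h₂.symm
      rw [Function.update_of_ne (by rintro rfl; exact hux rfl),
        Function.update_of_ne (by simpa using hcz)]
      exact hcol c (Or.inr h₂)

lemma four_le_sum_columnWeight_closedNbhd [Fintype α] {f : α × β → ℕ}
    (hf : IsWRDF (lexProd G H) f) (hH : 4 ≤ domNumber H) {a ℓ : α} (haℓ : G.Adj a ℓ)
    (hℓ : ∀ z, G.Adj ℓ z ↔ z = a) :
    4 ≤ ∑ x ∈ insert a (G.neighborFinset a), columnWeight f x := by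
  set m := ∑ x ∈ G.neighborFinset a, columnWeight f x
  rw [sum_insert (by simp)]
  by_contra! hlt
  have hℓm : columnWeight f ℓ ≤ m :=
    single_le_sum (fun _ _ => Nat.zero_le _) ((G.mem_neighborFinset _ _).2 haℓ)
  obtain ⟨b, -, -, hb⟩ := exists_free_of_columnWeight_add_card_lt (H := H) f ℓ (E := ∅)
    (by simp only [card_empty]; omega)
  obtain ⟨u, hub, hu1, hu⟩ := hf.2 (ℓ, b) (hb b (Or.inl rfl))
  have hua : u.1 = a :=
    (hℓ u.1).1 (adj_fst_of_adj_of_column_zero hub hu1 fun y hy => hb y (Or.inr hy)).symm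
  have ha1 : 1 ≤ columnWeight f a := hua ▸ hu1.trans (apply_le_columnWeight f u)
  obtain ⟨z, -, -, hz⟩ := exists_free_of_columnWeight_add_card_lt (H := H) f a (E := ∅)
    (by simp only [card_empty]; omega)
  obtain ⟨u', hu'z, hu'1, hu'⟩ := hf.2 (a, z) (hz z (Or.inl rfl))
  have hau' : G.Adj a u'.1 :=
    (adj_fst_of_adj_of_column_zero hu'z hu'1 fun y hy => hz y (Or.inr hy)).symm
  have hm1 : 1 ≤ m :=
    hu'1.trans (apply_le_sum_columnWeight f ((G.mem_neighborFinset _ _).2 hau'))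
  have hm2 : 2 ≤ m := by
    by_contra! hm
    obtain ⟨z', hz'z, hzz', hz'⟩ :=
      exists_free_of_columnWeight_add_card_lt (H := H) f a (E := {z})
        (by simp only [card_singleton]; omega)
    have := undefended_after_move (by simpa using hz'z) (by simpa using hzz') hz' hau' hu'1
      (by omega)
    -- `convert` reconciles the classical `DecidableEq (α × β)` used by `IsWRDF`
    exact hu' (a, z') (by convert this)
  obtain ⟨b', hb'b, hbb', hb'⟩ :=
    exists_free_of_columnWeight_add_card_lt (H := H) f ℓ (E := {b})
      (by simp only [card_singleton]; omega)
  have hNℓ : G.neighborFinset ℓ = {a} := by ext; simp [hℓ]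
  have := undefended_after_move (by simpa using hb'b) (by simpa using hbb') hb' (hua ▸ haℓ.symm)
    hu1 (by rw [hNℓ, sum_singleton]; omega)
  exact hu (ℓ, b') (by convert this)

lemma weakRomanNumber_lexProd_le_two_mul_card [Fintype α] {S : Finset α}
    (hS : IsTotalDomSet G S) (b₀ : β) : weakRomanNumber (lexProd G H) ≤ 2 * S.card := by
  refine (weakRomanNumber_le (isWRDF_two_on_isTotalDomSet hS b₀)).trans_eq ?_
  rw [sum_ite_mem, univ_inter, sum_const, card_product, card_singleton, smul_eq_mul, mul_one,
    mul_comm]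

lemma four_mul_card_le_weakRomanNumber_lexProd [Fintype α] {D : Finset α}
    (hD : IsTwoPacking G D) (hleaf : ∀ x ∈ D, ∃ y, G.Adj x y ∧ ∀ z, G.Adj y z ↔ z = x)
    (hH : 4 ≤ domNumber H) : 4 * D.card ≤ weakRomanNumber (lexProd G H) :=
  le_weakRomanNumber fun f hf => calc
    4 * D.card = ∑ _a ∈ D, 4 := by simp [mul_comm]
    _ ≤ ∑ a ∈ D, ∑ x ∈ insert a (G.neighborFinset a), columnWeight f x :=
      sum_le_sum fun a ha =>
        have ⟨ℓ, haℓ, hℓ⟩ := hleaf a ha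
        four_le_sum_columnWeight_closedNbhd hf hH haℓ hℓ
    _ ≤ ∑ x, columnWeight f x := sum_sum_closedNbhd_le_of_isTwoPacking hD _
    _ = ∑ p, f p := sum_columnWeight f

end LexProd

/-- If `γ_t(G) = 2γ(G)` and there is a `γ(G)`-set `D` in which
every vertex is adjacent to a vertex of degree one, then for any graph `H`
with `γ(H) ≥ 4`, `γ_r(G∘H) = 4γ(G)`. -/
theorem weakRoman_lexProd_eq_four_mul_dom {α β : Type*} [Fintype α] [Fintype β]
    (G : SimpleGraph α) (H : SimpleGraph β)
    (h₁ : totalDomNumber G = 2 * domNumber G)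
    (h₂ : ∃ D : Finset α, IsDomSet G D ∧ D.card = domNumber G ∧
      ∀ x ∈ D, ∃ y, G.Adj x y ∧ ∀ z, G.Adj y z ↔ z = x)
    (hH : 4 ≤ domNumber H) :
    weakRomanNumber (lexProd G H) = 4 * domNumber G := by
  obtain ⟨D, hD, hDcard, hleaf⟩ := h₂
  choose! ℓ hℓ hℓleaf using hleaf
  have hpack : IsTwoPacking G D :=
    isTwoPacking_of_two_mul_card_le hD (fun x hx => ⟨ℓ x, hℓ x hx⟩) fun T hT => by
      rw [hDcard, ← h₁]
      exact totalDomNumber_le_card hT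
  obtain ⟨b₀, -⟩ :=
    exists_not_dominated_of_card_lt (G := H) (B := ∅) (by simp only [card_empty]; omega)
  have hS : IsTotalDomSet G (D ∪ D.image ℓ) :=
    isTotalDomSet_of_superset hD subset_union_left fun x hx =>
      ⟨ℓ x, mem_union_right _ (mem_image_of_mem ℓ hx), (hℓ x hx).symm⟩
  refine le_antisymm ?_ ?_
  · calc weakRomanNumber (lexProd G H) ≤ 2 * (D ∪ D.image ℓ).card :=
          weakRomanNumber_lexProd_le_two_mul_card hS b₀
      _ ≤ 2 * (D.card + D.card) := by
          gcongr
          exact (card_union_le _ _).trans (Nat.add_le_add_left card_image_le _)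
      _ = 4 * domNumber G := by omega
  · rw [← hDcard]
    exact four_mul_card_le_weakRomanNumber_lexProd hpack
      (fun x hx => ⟨ℓ x, hℓ x hx, hℓleaf x hx⟩) hH
end

section
/- For any integer n ≥ 2 and any graph H with γ(H) ≥ 4, the weak Roman domination number of the lexicographic product of a path with H is: γ_r(P_n∘H) = n if n ≡ 0 (mod 4), γ_r(P_n∘H) = n+2 if n ≡ 2 (mod 4), and γ_r(P_n∘H) = n+1 otherwise (i.e. if n is odd). -/
open Finset
open scoped Classical

/-!
The upper bound places weight `2` on one copy `(j, b₀)` of `H` over each vertex `j` of a minimum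
total dominating set of `P_n`.

For the lower bound, let `N` be the weight of the two columns next to a column of weight `W`.
Since `γ(H) ≥ 4`, `N ≤ 1` forces `N + W ≥ 4`: if `N = 0` the support of the column dominates `H`;
if `N = 1`, a column vertex not dominated by the support must be defended by the single unit next
door, and after that move a second such vertex is left undefended unless `W ≥ 3`. Hence every
window of four consecutive columns carries weight at least `4`, and tiling `P_n`, padded by an
empty column at each end, with such windows gives the bound.
-/

-- `2 γ_t(P_n)`
def pathValue (n : ℕ) : ℕ := if n % 4 = 0 then n else if n % 4 = 2 then n + 2 else n + 1

def LocalBound (w : ℕ → ℕ) (t : ℕ) : Prop :=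
  2 ≤ w t + w (t + 2) ∨ 4 ≤ w t + w (t + 1) + w (t + 2)

section Sequence

variable {w : ℕ → ℕ}

lemma two_le_sum_range_three (h : LocalBound w 0) : 2 ≤ ∑ i ∈ range 3, w i := by
  simp only [LocalBound, sum_range_succ, sum_range_zero, zero_add] at *
  omega

lemma four_le_sum_Ico_four {a : ℕ} (h₀ : LocalBound w a) (h₁ : LocalBound w (a + 1)) :
    4 ≤ ∑ i ∈ Ico a (a + 4), w i := by
  simp only [LocalBound, sum_Ico_eq_sum_range, add_tsub_cancel_left, sum_range_succ,
    sum_range_zero, add_assoc, add_zero, Nat.reduceAdd] at *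
  omega

lemma four_mul_le_sum_Ico {a m : ℕ}
    (h : ∀ k < m, LocalBound w (a + 4 * k) ∧ LocalBound w (a + 4 * k + 1)) :
    4 * m ≤ ∑ i ∈ Ico a (a + 4 * m), w i := by
  induction m with
  | zero => simp
  | succ m ih =>
    have hinit := ih fun k hk => h k (by omega)
    have hlast := four_le_sum_Ico_four (h m (by omega)).1 (h m (by omega)).2
    rw [mul_add, mul_one, ← add_assoc,
      ← sum_Ico_consecutive w (by omega) (by omega : a + 4 * m ≤ a + 4 * m + 4)]
    omega

lemma sum_Ico_le_sum_range {a b N : ℕ} (h : b ≤ N) :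
    ∑ i ∈ Ico a b, w i ≤ ∑ i ∈ range N, w i :=
  sum_le_sum_of_subset fun i hi => by simp only [mem_Ico, mem_range] at *; omega

theorem pathValue_le_sum_range {n : ℕ} (h : ∀ t < n, LocalBound w t) :
    pathValue n ≤ ∑ i ∈ range (n + 2), w i := by
  by_cases h1 : n % 4 = 1
  · have hhead := two_le_sum_range_three (h 0 (by omega))
    have hbody := four_mul_le_sum_Ico (a := 3) (m := n / 4) fun k hk =>
      ⟨h _ (by omega), h _ (by omega)⟩
    rw [range_eq_Ico, ← sum_Ico_consecutive w (by omega) (by omega : 3 ≤ n + 2), ← range_eq_Ico,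
      (by omega : n + 2 = 3 + 4 * (n / 4)), pathValue, if_neg (by omega), if_neg (by omega)]
    omega
  by_cases h0 : n % 4 = 0
  · have hbody := four_mul_le_sum_Ico (a := 1) (m := n / 4) fun k hk =>
      ⟨h _ (by omega), h _ (by omega)⟩
    have := sum_Ico_le_sum_range (w := w) (a := 1) (by omega : 1 + 4 * (n / 4) ≤ n + 2)
    rw [pathValue, if_pos h0]
    omega
  · have hbody := four_mul_le_sum_Ico (a := 0) (m := n / 4 + 1) fun k hk =>
      ⟨h _ (by omega), h _ (by omega)⟩
    have := sum_Ico_le_sum_range (w := w) (a := 0) (by omega : 0 + 4 * (n / 4 + 1) ≤ n + 2)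
    unfold pathValue
    split_ifs <;> omega

end Sequence

lemma card_filter_ne_zero_le_sum {ι : Type*} [Fintype ι] (g : ι → ℕ) :
    #{i | g i ≠ 0} ≤ ∑ i, g i :=
  calc #{i | g i ≠ 0} = #{i | g i ≠ 0} • 1 := by rw [smul_eq_mul, mul_one]
    _ ≤ ∑ i ∈ {i | g i ≠ 0}, g i := card_nsmul_le_sum _ _ 1 fun i hi => by
          simp only [mem_filter] at hi; omega
    _ ≤ ∑ i, g i := sum_le_sum_of_subset (subset_univ _)

section Domination

variable {β : Type*} [Fintype β] {H : SimpleGraph β}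

lemma nonempty_of_domNumber_pos (h : 0 < domNumber H) : Nonempty β := by
  by_contra hβ
  rw [not_nonempty_iff] at hβ
  exact h.ne' (Nat.eq_zero_of_le_zero (Nat.sInf_le ⟨∅, fun b => isEmptyElim b, rfl⟩))

lemma exists_not_adj_of_card_lt_domNumber (D : Finset β) (hD : #D < domNumber H) :
    ∃ b ∉ D, ∀ d ∈ D, ¬ H.Adj d b := by
  by_contra! h
  exact hD.not_ge (Nat.sInf_le ⟨D, h, rfl⟩)

end Domination

section LexProd

variable {α β : Type*} [Fintype α] [Fintype β] {G : SimpleGraph α} {H : SimpleGraph β}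

theorem four_le_add_of_isWRDF_lexProd {f : α × β → ℕ} (hf : IsWRDF (lexProd G H) f)
    (hH : 4 ≤ domNumber H) (a : α) (hN : ∑ p with G.Adj a p.1, f p ≤ 1) :
    4 ≤ ∑ p with G.Adj a p.1, f p + ∑ b, f (a, b) := by
  set N := ∑ p with G.Adj a p.1, f p
  by_contra! hlt
  set T : Finset β := {b | f (a, b) ≠ 0}
  have hTW : #T ≤ ∑ b, f (a, b) := card_filter_ne_zero_le_sum _
  obtain ⟨b₁, hb₁T, hb₁⟩ := exists_not_adj_of_card_lt_domNumber (H := H) T (by omega)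
  have hfb₁ : f (a, b₁) = 0 := by simpa [T] using hb₁T
  obtain ⟨⟨c, b⟩, hu, hu1, hsafe⟩ := hf.2 (a, b₁) hfb₁
  have hac : G.Adj a c := by
    rcases hu with hu | ⟨rfl, hb⟩
    · exact hu.symm
    · exact absurd hb (hb₁ b (by simp [T]; omega))
  have hN1 : f (c, b) ≤ N := single_le_sum (fun p _ => Nat.zero_le (f p)) (by simpa using hac)
  have hsingle : ∀ q : α × β, G.Adj a q.1 → q ≠ (c, b) → f q = 0 := by
    intro q hq hqc
    have : f (c, b) + f q ≤ N := by
      rw [← sum_pair hqc.symm]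
      exact sum_le_sum_of_subset (by simp [insert_subset_iff, hac, hq])
    omega
  obtain ⟨b₂, hb₂T, hb₂⟩ := exists_not_adj_of_card_lt_domNumber (H := H) (insert b₁ T)
    (by have := card_insert_le b₁ T; omega)
  simp only [mem_insert, not_or, forall_eq_or_imp, T, mem_filter, mem_univ, true_and,
    not_not] at hb₂T hb₂
  have hca : c ≠ a := (G.ne_of_adj hac).symm
  refine hsafe (a, b₂) ⟨by simp [hca.symm, hb₂T], ?_⟩
  rintro ⟨x, y⟩ (hx | ⟨rfl, hy⟩)
  · by_cases hxy : (x, y) = (c, b)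
    · simp only [hxy, Function.update_self]
      omega
    · simp [hxy, (G.ne_of_adj hx).symm, hsingle (x, y) hx hxy]
  · have hyb₁ : y ≠ b₁ := by rintro rfl; exact hb₂.1 hy.symm
    have hfy : f (a, y) = 0 := by_contra fun h => hb₂.2 y h hy.symm
    simp [hca.symm, hyb₁, hfy]

theorem exists_isWRDF_lexProd_of_isTotalDomSet {P : Finset α} (hP : IsTotalDomSet G P) (b₀ : β) :
    ∃ f, IsWRDF (lexProd G H) f ∧ ∑ p, f p = 2 * #P := by
  set f : α × β → ℕ := fun p => if p ∈ P ×ˢ {b₀} then 2 else 0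
  refine ⟨f, ⟨fun v => by simp only [f]; split_ifs <;> omega, fun v hv => ?_⟩, ?_⟩
  · obtain ⟨c, hcP, hc⟩ := hP v.1
    refine ⟨(c, b₀), Or.inl hc, by simp [f, hcP], fun x hx => ?_⟩
    obtain ⟨d, hdP, hd⟩ := hP x.1
    refine absurd (hx.2 (d, b₀) (Or.inl hd.symm)) ?_
    by_cases hdc : d = c
    · simp [hdc, f, hcP]
    · have : (d, b₀) ≠ v := by rintro rfl; simp [f, hdP] at hv
      simp [hdc, this, f, hdP]
  · rw [sum_ite_mem, univ_inter, sum_const, card_product, card_singleton, smul_eq_mul, mul_one,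
      mul_comm]

end LexProd

lemma card_filter_univ_fin_eq_count (p : ℕ → Prop) [DecidablePred p] (n : ℕ) :
    #{j : Fin n | p j} = Nat.count p n := by
  rw [Nat.count_eq_card_filter_range, ← Nat.Iio_eq_range, ← Fin.map_valEmbedding_univ, filter_map,
    card_map]
  rfl

lemma count_mod_four_one_or_two (k : ℕ) :
    Nat.count (fun j => j % 4 = 1 ∨ j % 4 = 2) k = (k + 2) / 4 + (k + 1) / 4 := by
  induction k with
  | zero => rfl
  | succ k ih => rw [Nat.count_succ, ih]; split_ifs <;> omega

section PathLexProd

open SimpleGraph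

theorem exists_isTotalDomSet_pathGraph {n : ℕ} (hn : 2 ≤ n) :
    ∃ P : Finset (Fin n), IsTotalDomSet (pathGraph n) P ∧ 2 * #P = pathValue n := by
  set P : Finset (Fin n) :=
    insert ⟨n - 2, by omega⟩ (univ.filter fun j : Fin n => j.val % 4 = 1 ∨ j.val % 4 = 2)
  refine ⟨P, fun v => ?_, ?_⟩
  · by_cases h : (v.val % 4 = 0 ∨ v.val % 4 = 1) ∧ v.val + 1 < n
    · exact ⟨⟨v + 1, h.2⟩, by simp [P]; omega, by simp [pathGraph_adj]⟩
    · exact ⟨⟨v - 1, by omega⟩, by simp [P, Fin.ext_iff]; omega, by simp [pathGraph_adj]; omega⟩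
  · rw [card_insert_eq_ite, card_filter_univ_fin_eq_count (fun j => j % 4 = 1 ∨ j % 4 = 2),
      count_mod_four_one_or_two]
    simp only [mem_filter, mem_univ, true_and, pathValue]
    split_ifs <;> omega

variable {β : Type*} [Fintype β] {H : SimpleGraph β} {n : ℕ}

-- Column `j` sits at index `j + 1`, so that indices `0` and `n + 1` are empty boundary columns.
def colWeight (f : Fin n × β → ℕ) (i : ℕ) : ℕ := ∑ p with p.1.val + 1 = i, f p

lemma sum_eq_sum_range_colWeight (f : Fin n × β → ℕ) :
    ∑ p, f p = ∑ i ∈ range (n + 2), colWeight f i :=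
  (sum_fiberwise_of_maps_to (fun p _ => mem_range.2 (by omega)) f).symm

lemma localBound_colWeight {f : Fin n × β → ℕ} (hf : IsWRDF (lexProd (pathGraph n) H) f)
    (hH : 4 ≤ domNumber H) (t : Fin n) : LocalBound (colWeight f) t := by
  have hnbhd : ∑ p with (pathGraph n).Adj t p.1, f p = colWeight f t + colWeight f (t + 2) := by
    rw [colWeight, colWeight, ← sum_union (disjoint_filter.2 fun p _ h => by omega), ← filter_or]
    exact sum_congr (by ext p; simp [pathGraph_adj]; omega) fun _ _ => rfl
  have hfiber : ∑ b, f (t, b) = colWeight f (t + 1) := by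
    simp only [colWeight, sum_filter, Fintype.sum_prod_type, add_left_inj, Fin.val_inj]
    rw [Fintype.sum_eq_single t fun x hx => by simp [hx]]
    simp
  have := four_le_add_of_isWRDF_lexProd hf hH t
  rw [hnbhd, hfiber] at this
  unfold LocalBound
  omega

theorem pathValue_le_sum_of_isWRDF {f : Fin n × β → ℕ} (hf : IsWRDF (lexProd (pathGraph n) H) f)
    (hH : 4 ≤ domNumber H) : pathValue n ≤ ∑ p, f p :=
  sum_eq_sum_range_colWeight f ▸
    pathValue_le_sum_range fun t ht => localBound_colWeight hf hH ⟨t, ht⟩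

theorem weakRomanNumber_lexProd_pathGraph (hn : 2 ≤ n) (hH : 4 ≤ domNumber H) :
    weakRomanNumber (lexProd (pathGraph n) H) = pathValue n := by
  obtain ⟨b₀⟩ := nonempty_of_domNumber_pos (H := H) (by omega)
  obtain ⟨P, hP, hPcard⟩ := exists_isTotalDomSet_pathGraph hn
  obtain ⟨f, hf, hfsum⟩ := exists_isWRDF_lexProd_of_isTotalDomSet (H := H) hP b₀
  refine le_antisymm (Nat.sInf_le ⟨f, hf, hfsum.trans hPcard⟩) ?_
  exact le_csInf ⟨_, f, hf, rfl⟩ fun _ ⟨g, hg, hgsum⟩ => hgsum ▸ pathValue_le_sum_of_isWRDF hg hH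

end PathLexProd

/-- For any `n ≥ 2` and any graph `H` with `γ(H) ≥ 4`,
`γ_r(P_n∘H)` equals `n` if `n ≡ 0 (mod 4)`, `n+2` if `n ≡ 2 (mod 4)`,
and `n+1` otherwise. -/
theorem weakRoman_lexProd_path {β : Type*} [Fintype β]
    (n : ℕ) (hn : 2 ≤ n) (H : SimpleGraph β) (hH : 4 ≤ domNumber H) :
    (n % 4 = 0 → weakRomanNumber (lexProd (SimpleGraph.pathGraph n) H) = n) ∧
    (n % 4 = 2 → weakRomanNumber (lexProd (SimpleGraph.pathGraph n) H) = n + 2) ∧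
    (n % 4 ≠ 0 → n % 4 ≠ 2 →
      weakRomanNumber (lexProd (SimpleGraph.pathGraph n) H) = n + 1) := by
  rw [weakRomanNumber_lexProd_pathGraph hn hH, pathValue]
  exact ⟨fun h => by simp [h], fun h => by simp [h], fun h₀ h₂ => by simp [h₀, h₂]⟩
end
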